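/- arXiv:1109.5321 — 6 statements merged into one kernel-verified Lean document; each statement's English description precedes it below -/
import Mathlib

section
/- Let p be a prime and e ≥ 2 an integer. Set a = p^e − p^{e−1}, b = p^{e−1} − p^{e−2}, c = p^{e−2} − 1, so that a + b + c = p^e − 1. Then the multinomial coefficient (p^e − 1)! / (a! · b! · c!) is not divisible by p. -/
/-!
The quotient equals `C(p^e - 1, a) * C(p^(e-1) - 1, b)`. Each `C(p^m - 1, k)` with `k < p^m` is
`≡ (-1)^k` modulo `p`, because Pascal's rule gives
`C(p^m - 1, k) + C(p^m - 1, k + 1) = C(p^m, k + 1)`, which `p` divides when `0 < k + 1 < p^m`.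
-/

open Nat

theorem Nat.Prime.choose_prime_pow_sub_one_cast {p : ℕ} (hp : p.Prime) (m : ℕ) {k : ℕ}
    (hk : k < p ^ m) : ((p ^ m - 1).choose k : ZMod p) = (-1) ^ k := by
  induction k with
  | zero => simp
  | succ k ih =>
    have hpos : 0 < p ^ m := by omega
    have hpascal := Nat.choose_succ_succ' (p ^ m - 1) k
    rw [Nat.sub_add_cancel hpos] at hpascal
    have hvanish : ((p ^ m).choose (k + 1) : ZMod p) = 0 :=
      (ZMod.natCast_eq_zero_iff _ _).mpr (hp.dvd_choose_pow k.succ_ne_zero hk.ne)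
    rw [hpascal, Nat.cast_add, ih (by omega)] at hvanish
    rw [pow_succ, mul_neg_one, eq_neg_of_add_eq_zero_right hvanish]

theorem Nat.Prime.not_dvd_choose_prime_pow_sub_one {p : ℕ} (hp : p.Prime) (m : ℕ) {k : ℕ}
    (hk : k < p ^ m) : ¬ p ∣ (p ^ m - 1).choose k := by
  have := Fact.mk hp
  rw [← ZMod.natCast_eq_zero_iff, hp.choose_prime_pow_sub_one_cast m hk]
  exact pow_ne_zero k (neg_ne_zero.mpr one_ne_zero)

theorem Nat.factorial_add_add_div (a b c : ℕ) :
    (a + b + c)! / (a ! * b ! * c !) = (a + b + c).choose a * (b + c).choose b := by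
  refine Nat.div_eq_of_eq_mul_left (by positivity) ?_
  rw [add_assoc]
  calc (a + (b + c))! = (a + (b + c)).choose a * a ! * (b + c)! := by
        rw [← Nat.choose_mul_factorial_mul_factorial (Nat.le_add_right a (b + c)),
          Nat.add_sub_cancel_left]
    _ = (a + (b + c)).choose a * a ! * ((b + c).choose b * b ! * c !) := by
        rw [← Nat.choose_mul_factorial_mul_factorial (Nat.le_add_right b c),
          Nat.add_sub_cancel_left]
    _ = (a + (b + c)).choose a * (b + c).choose b * (a ! * b ! * c !) := by ring

theorem multinomial_not_div (p e : ℕ) (hp : p.Prime) (he : 2 ≤ e) :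
    ¬ p ∣ (Nat.factorial (p ^ e - 1)) /
        (Nat.factorial (p ^ e - p ^ (e - 1)) * Nat.factorial (p ^ (e - 1) - p ^ (e - 2)) *
          Nat.factorial (p ^ (e - 2) - 1)) := by
  have h0 : 1 ≤ p ^ (e - 2) := Nat.one_le_pow _ _ hp.pos
  have h1 : p ^ (e - 2) < p ^ (e - 1) := Nat.pow_lt_pow_right hp.one_lt (by omega)
  have h2 : p ^ (e - 1) < p ^ e := Nat.pow_lt_pow_right hp.one_lt (by omega)
  have hsum : p ^ e - 1 =
      (p ^ e - p ^ (e - 1)) + (p ^ (e - 1) - p ^ (e - 2)) + (p ^ (e - 2) - 1) := by omega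
  have htail : (p ^ (e - 1) - p ^ (e - 2)) + (p ^ (e - 2) - 1) = p ^ (e - 1) - 1 := by omega
  rw [hsum, Nat.factorial_add_add_div, ← hsum, htail, hp.dvd_mul, not_or]
  exact ⟨hp.not_dvd_choose_prime_pow_sub_one e (by omega),
    hp.not_dvd_choose_prime_pow_sub_one (e - 1) (by omega)⟩
end

section
/- Let d ≥ 1 and e > 0 be a real number. Then for all sufficiently large m, there is no upper triangular (m+1)×(m+1) matrix A = (a_{ij})_{0≤i,j≤m} with nonnegative real entries satisfying: (1) every column sum ∑_{i} a_{ij} = d; (2) every weighted column sum ∑_{i} i·a_{ij} = j for all 0 ≤ j ≤ m; and (3) every row sum ∑_{j} a_{ij} ≤ d² − e. -/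
/-!
Pair the matrix with the weights `exp (-c i)`. Column `j` is a nonnegative mass `d` with
barycentre `j / d`, so by Jensen it contributes at least `d * exp (-c j / d)`, while the row
bounds cap the total at `(d² - e) ∑ exp (-c i)`. Summing the geometric series, the lower bound
tends to `d / (1 - exp (-c / d)) ≈ d² / c` and the upper bound to
`(d² - e) / (1 - exp (-c)) ≈ (d² - e) / c`, which are incompatible once `c` is small
(`c = e / d²` suffices) and `m` is large.
-/

open Finset Filter Real

theorem ConvexOn.mul_map_div_le_sum {f : ℝ → ℝ} (hf : ConvexOn ℝ Set.univ f) {ι : Type*}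
    {s : Finset ι} {w x : ι → ℝ} {W t : ℝ} (hw : ∀ i ∈ s, 0 ≤ w i) (hW : 0 < W)
    (hsum : ∑ i ∈ s, w i = W) (hmean : ∑ i ∈ s, w i * x i = t) :
    W * f (t / W) ≤ ∑ i ∈ s, w i * f (x i) := by
  have h := hf.map_centerMass_le hw (hsum ▸ hW) fun i _ => Set.mem_univ (x i)
  simp only [Finset.centerMass, smul_eq_mul, Function.comp_apply, hsum, hmean] at h
  rwa [inv_mul_eq_div, inv_mul_eq_div, le_div_iff₀' hW] at h

theorem convexOn_exp_mul (c : ℝ) : ConvexOn ℝ Set.univ fun x => exp (c * x) := by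
  simpa only [← exp_mul] using convexOn_rpow_left (exp_pos c)

theorem mul_sum_map_div_le_of_colSum_rowSum {f : ℝ → ℝ} (hf : ConvexOn ℝ Set.univ f)
    {s : Finset ℕ} (hf₀ : ∀ i ∈ s, 0 ≤ f i) {A : ℕ → ℕ → ℝ} {D R : ℝ} (hD : 0 < D)
    (hA : ∀ i ∈ s, ∀ j ∈ s, 0 ≤ A i j) (hcol : ∀ j ∈ s, ∑ i ∈ s, A i j = D)
    (hmean : ∀ j ∈ s, ∑ i ∈ s, (i : ℝ) * A i j = j) (hrow : ∀ i ∈ s, ∑ j ∈ s, A i j ≤ R) :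
    D * ∑ j ∈ s, f (j / D) ≤ R * ∑ i ∈ s, f i :=
  calc D * ∑ j ∈ s, f (j / D) = ∑ j ∈ s, D * f (j / D) := mul_sum _ _ _
    _ ≤ ∑ j ∈ s, ∑ i ∈ s, A i j * f i := sum_le_sum fun j hj =>
        hf.mul_map_div_le_sum (fun i hi => hA i hi j hj) hD (hcol j hj)
          (by simpa only [mul_comm] using hmean j hj)
    _ = ∑ i ∈ s, (∑ j ∈ s, A i j) * f i := by simp only [sum_mul]; exact sum_comm
    _ ≤ ∑ i ∈ s, R * f i :=
        sum_le_sum fun i hi => mul_le_mul_of_nonneg_right (hrow i hi) (hf₀ i hi)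
    _ = R * ∑ i ∈ s, f i := (mul_sum _ _ _).symm

theorem eventually_mul_geom_sum_lt {a b q r : ℝ} (hq₀ : 0 ≤ q) (hq₁ : q < 1) (hr₀ : 0 ≤ r)
    (hr₁ : r < 1) (h : a * (1 - r) < b * (1 - q)) :
    ∀ᶠ n in atTop, a * ∑ i ∈ range n, q ^ i < b * ∑ i ∈ range n, r ^ i := by
  refine ((hasSum_geometric_of_lt_one hq₀ hq₁).tendsto_sum_nat.const_mul a).eventually_lt
    ((hasSum_geometric_of_lt_one hr₀ hr₁).tendsto_sum_nat.const_mul b) ?_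
  rwa [← div_eq_mul_inv, ← div_eq_mul_inv, div_lt_div_iff₀ (sub_pos.2 hq₁) (sub_pos.2 hr₁)]

theorem exists_pos_mul_one_sub_exp_lt {D e : ℝ} (hD : 0 < D) (he : 0 < e) :
    ∃ c > 0, (D ^ 2 - e) * (1 - exp (-c / D)) < D * (1 - exp (-c)) := by
  set c := e / D ^ 2
  have hc : 0 < c := by positivity
  have hcD : c * D ^ 2 = e := div_mul_cancel₀ e (by positivity)
  refine ⟨c, hc, ?_⟩
  have hq : exp (-c) < 1 := exp_lt_one_iff.2 (neg_lt_zero.2 hc)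
  have hr : 1 - exp (-c / D) ≤ c / D := by linarith [add_one_le_exp (-c / D), neg_div D c]
  have hq' : c ≤ (1 - exp (-c)) * (1 + c) := by
    have := mul_le_mul_of_nonneg_left (add_one_le_exp c) (exp_pos (-c)).le
    rw [← exp_add, neg_add_cancel, exp_zero] at this
    linarith
  rcases le_or_gt (D ^ 2 - e) 0 with hle | hlt
  · nlinarith [exp_lt_one_iff.2 (div_neg_of_neg_of_pos (neg_lt_zero.2 hc) hD)]
  · have : (D ^ 2 - e) * c * (1 + c) < D ^ 2 * (1 - exp (-c)) * (1 + c) :=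
      calc (D ^ 2 - e) * c * (1 + c) = c * (D ^ 2 - e * c) := by linear_combination c * hcD
        _ < c * D ^ 2 := by gcongr; nlinarith
        _ ≤ D ^ 2 * (1 - exp (-c)) * (1 + c) := by nlinarith
    calc (D ^ 2 - e) * (1 - exp (-c / D)) ≤ (D ^ 2 - e) * (c / D) := by gcongr
      _ < D * (1 - exp (-c)) := by
        rw [mul_div_assoc', div_lt_iff₀ hD]
        nlinarith

theorem no_triangular_matrix (d : ℕ) (hd : 1 ≤ d) (e : ℝ) (he : 0 < e) :
    ∃ M : ℕ, ∀ m : ℕ, M ≤ m →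
      ¬ ∃ A : ℕ → ℕ → ℝ,
        (∀ i j, i ≤ m → j ≤ m → 0 ≤ A i j) ∧
        (∀ i j, j < i → A i j = 0) ∧
        (∀ j, j ≤ m → ∑ i ∈ Finset.range (m + 1), A i j = d) ∧
        (∀ j, j ≤ m → ∑ i ∈ Finset.range (m + 1), (i : ℝ) * A i j = j) ∧
        (∀ i, i ≤ m → ∑ j ∈ Finset.range (m + 1), A i j ≤ (d : ℝ) ^ 2 - e) := by
  have hD : (0 : ℝ) < d := by exact_mod_cast hd
  obtain ⟨c, hc, hgap⟩ := exists_pos_mul_one_sub_exp_lt hD he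
  have hlim := eventually_mul_geom_sum_lt (exp_pos _).le (exp_lt_one_iff.2 (neg_lt_zero.2 hc))
    (exp_pos _).le (exp_lt_one_iff.2 (div_neg_of_neg_of_pos (neg_lt_zero.2 hc) hD)) hgap
  obtain ⟨M, hM⟩ := eventually_atTop.1 hlim
  refine ⟨M, fun m hm ⟨A, hA, _, hcol, hmean, hrow⟩ => (hM (m + 1) (by omega)).not_ge ?_⟩
  have hs : ∀ {k}, k ∈ range (m + 1) → k ≤ m := mem_range_succ_iff.1
  have key := mul_sum_map_div_le_of_colSum_rowSum (convexOn_exp_mul (-c))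
    (fun i _ => (exp_pos _).le) hD (fun i hi j hj => hA i j (hs hi) (hs hj))
    (fun j hj => hcol j (hs hj)) (fun j hj => hmean j (hs hj)) (fun i hi => hrow i (hs hi))
  have hpow (a : ℝ) (n : ℕ) : exp (a * n) = exp a ^ n := by rw [mul_comm, exp_nat_mul]
  simpa only [mul_div_assoc', ← div_mul_eq_mul_div, hpow] using key
end

section
/- Let k be a commutative ring, f ∈ k[x_1,…,x_N] a polynomial, and for m ≥ 0 define polynomials F^{(0)},…,F^{(m)} ∈ k[x_i^{(j)} : 1 ≤ i ≤ N, 0 ≤ j ≤ m] by the identity f(∑_j x_1^{(j)} t^j, …, ∑_j x_N^{(j)} t^j) ≡ ∑_{j=0}^{m} F^{(j)} t^j (mod t^{m+1}) in k[x_i^{(j)}][t]/(t^{m+1}). If f is homogeneous of degree d, then each F^{(j)} is homogeneous of degree d, and F^{(j)} is quasi-homogeneous of weight j when the variable x_i^{(j')} is assigned weight j'. -/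
/-!
Give `k[x_i^{(j)}][t]` the bigrading with `x_i^{(j)}` of bidegree `(1, j)` and `t` of bidegree
`(0, -1)`. Each jet coordinate `∑ⱼ x_i^{(j)} tʲ` is then bihomogeneous of bidegree `(1, 0)`, so
substituting them into a form of degree `d` gives an element of bidegree `(d, 0)`, and the
coefficient of `tʲ` in it has bidegree `(d, j)`.
-/

open MvPolynomial Polynomial

/-- The elements of bidegree `(e, 0)`, when `t` has bidegree `(0, -1)` and `X v` has bidegree
`(1, w v)`. -/
def jetHomogeneousSubmodule (R : Type*) {σ : Type*} [CommSemiring R] (w : σ → ℕ) (e : ℕ) :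
    Submodule R (MvPolynomial σ R)[X] where
  carrier := {P | ∀ j, (P.coeff j).IsHomogeneous e ∧ (P.coeff j).IsWeightedHomogeneous w j}
  zero_mem' j := by
    simpa using ⟨isHomogeneous_zero σ R e, isWeightedHomogeneous_zero R w j⟩
  add_mem' hP hQ j := by
    simpa only [Polynomial.coeff_add] using ⟨(hP j).1.add (hQ j).1, (hP j).2.add (hQ j).2⟩
  smul_mem' c P hP j := by
    simpa only [Polynomial.coeff_smul, MvPolynomial.smul_eq_C_mul] using
      ⟨(hP j).1.C_mul c, (hP j).2.C_mul c⟩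

namespace jetHomogeneousSubmodule

variable {R σ : Type*} [CommSemiring R] {w : σ → ℕ}

theorem one_mem : (1 : (MvPolynomial σ R)[X]) ∈ jetHomogeneousSubmodule R w 0 := by
  intro j
  rcases eq_or_ne j 0 with rfl | hj
  · simpa using ⟨isHomogeneous_one σ R, isWeightedHomogeneous_one R w⟩
  · simpa [Polynomial.coeff_one, hj] using
      ⟨isHomogeneous_zero σ R 0, isWeightedHomogeneous_zero R w j⟩

theorem mul_mem {e e' : ℕ} {P Q : (MvPolynomial σ R)[X]}
    (hP : P ∈ jetHomogeneousSubmodule R w e) (hQ : Q ∈ jetHomogeneousSubmodule R w e') :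
    P * Q ∈ jetHomogeneousSubmodule R w (e + e') := by
  intro j
  rw [Polynomial.coeff_mul]
  refine ⟨IsHomogeneous.sum _ _ _ fun x _ => (hP x.1).1.mul (hQ x.2).1,
    IsWeightedHomogeneous.sum _ _ _ fun x hx => ?_⟩
  rw [← Finset.HasAntidiagonal.mem_antidiagonal.mp hx]
  exact (hP x.1).2.mul (hQ x.2).2

instance : SetLike.GradedMonoid (jetHomogeneousSubmodule R w) where
  one_mem := one_mem
  mul_mem _ _ _ _ := mul_mem

theorem C_X_mul_X_pow_mem (v : σ) :
    Polynomial.C (X v) * Polynomial.X ^ w v ∈ jetHomogeneousSubmodule R w 1 := by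
  intro j
  rw [coeff_C_mul_X_pow]
  split_ifs with h
  · exact ⟨isHomogeneous_X R v, h ▸ isWeightedHomogeneous_X R w v⟩
  · exact ⟨isHomogeneous_zero σ R 1, isWeightedHomogeneous_zero R w j⟩

end jetHomogeneousSubmodule

theorem MvPolynomial.IsHomogeneous.aeval_mem_graded {R S σ ι : Type*} [CommSemiring R]
    [CommSemiring S] [Algebra R S] [AddCommMonoid ι] (A : ι → Submodule R S)
    [SetLike.GradedMonoid A] {φ : MvPolynomial σ R} {n : ℕ} (hφ : φ.IsHomogeneous n)
    {m : ι} (g : σ → S) (hg : ∀ i, g i ∈ A m) :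
    MvPolynomial.aeval g φ ∈ A (n • m) := by
  rw [φ.as_sum, map_sum]
  refine Submodule.sum_mem _ fun c hc => ?_
  have hdeg : ∑ i ∈ c.support, c i = n := by
    simpa [Finsupp.weight_apply, Finsupp.sum] using hφ (mem_support_iff.mp hc)
  rw [aeval_monomial, ← zero_add (n • m), ← hdeg, Finset.sum_smul]
  exact SetLike.mul_mem_graded (SetLike.algebraMap_mem_graded A _)
    (SetLike.prod_pow_mem_graded A _ _ _ fun i _ => hg i)

theorem jet_equation_homogeneous_general {k : Type*} [CommRing k] (N m d : ℕ)
    (f : MvPolynomial (Fin N) k) (hf : f.IsHomogeneous d) (j : ℕ) :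
    MvPolynomial.IsHomogeneous
      (Polynomial.coeff
        (MvPolynomial.aeval
          (fun i : Fin N =>
            ∑ j' ∈ Finset.range (m + 1),
              Polynomial.C (MvPolynomial.X (i, j') : MvPolynomial (Fin N × ℕ) k) *
                Polynomial.X ^ j') f) j) d ∧
    MvPolynomial.IsWeightedHomogeneous (fun v : Fin N × ℕ => v.2)
      (Polynomial.coeff
        (MvPolynomial.aeval
          (fun i : Fin N =>
            ∑ j' ∈ Finset.range (m + 1),
              Polynomial.C (MvPolynomial.X (i, j') : MvPolynomial (Fin N × ℕ) k) *
                Polynomial.X ^ j') f) j) j := by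
  have hjet := hf.aeval_mem_graded (jetHomogeneousSubmodule k fun v : Fin N × ℕ => v.2) _
    fun i => Submodule.sum_mem _ fun j' (_ : j' ∈ Finset.range (m + 1)) =>
      jetHomogeneousSubmodule.C_X_mul_X_pow_mem (i, j')
  rw [smul_eq_mul, mul_one] at hjet
  exact hjet j

theorem jet_equation_homogeneous {k : Type*} [CommRing k] (N m d : ℕ)
    (f : MvPolynomial (Fin N) k) (hf : f.IsHomogeneous d) (j : ℕ) (hj : j ≤ m) :
    MvPolynomial.IsHomogeneous
      (Polynomial.coeff
        (MvPolynomial.aeval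
          (fun i : Fin N =>
            ∑ j' ∈ Finset.range (m + 1),
              Polynomial.C (MvPolynomial.X (i, j') : MvPolynomial (Fin N × ℕ) k) *
                Polynomial.X ^ j') f) j) d ∧
    MvPolynomial.IsWeightedHomogeneous (fun v : Fin N × ℕ => v.2)
      (Polynomial.coeff
        (MvPolynomial.aeval
          (fun i : Fin N =>
            ∑ j' ∈ Finset.range (m + 1),
              Polynomial.C (MvPolynomial.X (i, j') : MvPolynomial (Fin N × ℕ) k) *
                Polynomial.X ^ j') f) j) j :=
  jet_equation_homogeneous_general N m d f hf j
end

section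
/- Let k be a commutative ring, f ∈ k[x_1,…,x_N] homogeneous of degree d, and define F^{(j)} as the coefficient of t^j in f(∑_j x_1^{(j)} t^j, …, ∑_j x_N^{(j)} t^j). Then for every j ≥ d, substituting x_i^{(0)} = 0 for all i yields F^{(j)}(0, x^{(1)}, …, x^{(j)}) = F^{(j−d)}(x^{(1)}, …, x^{(j−d+1)}), where on the right-hand side F^{(j−d)} is evaluated with x^{(j')} in place of x^{(j'−1)}, i.e., the variables are shifted in weight by one. -/
/-!
Apply the substitution `x^{(0)} ↦ 0` coefficientwise to the generating polynomial. Each argument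
`∑ x_i^{(j)} t^j` becomes `t · ∑ x_i^{(j)} t^{j-1}`, and since `f` is homogeneous of degree `d`
the factor `t` comes out as `t^d`; comparing coefficients of `t^j` gives the shift by `d`.
-/

open MvPolynomial Finset

theorem MvPolynomial.IsHomogeneous.aeval_mul_left {σ R A : Type*} [CommSemiring R]
    [CommSemiring A] [Algebra R A] {f : MvPolynomial σ R} {d : ℕ} (hf : f.IsHomogeneous d)
    (c : A) (g : σ → A) :
    MvPolynomial.aeval (fun i => c * g i) f = c ^ d * MvPolynomial.aeval g f := by
  rw [f.as_sum, map_sum, map_sum, mul_sum]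
  refine sum_congr rfl fun s hs => ?_
  simp only [aeval_monomial, Finsupp.prod, mul_pow, prod_mul_distrib, prod_pow_eq_pow_sum,
    ← hf.degree_eq_sum_deg_support hs]
  ring

open Polynomial in
theorem Polynomial.sum_range_C_ite_mul_X_pow {R : Type*} [Semiring R] (b : ℕ → R) (m : ℕ) :
    ∑ j ∈ range (m + 1), C (if j = 0 then 0 else b j) * X ^ j =
      X * ∑ j ∈ Icc 1 m, C (b j) * X ^ (j - 1) := by
  rw [range_eq_Ico, ← insert_Ico_add_one_left_eq_Ico (Nat.succ_pos _), sum_insert (by simp),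
    mul_sum]
  simp only [if_pos, C_0, zero_mul, zero_add]
  refine sum_congr (by ext; simp) fun j hj => ?_
  obtain ⟨j, rfl⟩ : ∃ i, j = i + 1 := Nat.exists_eq_add_one.2 (by simp at hj; omega)
  rw [if_neg j.succ_ne_zero, Nat.add_sub_cancel, pow_succ', ← mul_assoc, ← mul_assoc, X_mul]

theorem jet_equation_shift_general {k : Type*} [CommRing k] (N m d : ℕ)
    (f : MvPolynomial (Fin N) k) (hf : f.IsHomogeneous d) (j : ℕ) (hdj : d ≤ j) :
    MvPolynomial.aeval
      (fun v : Fin N × ℕ =>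
        if v.2 = 0 then 0 else (MvPolynomial.X v : MvPolynomial (Fin N × ℕ) k))
      (Polynomial.coeff
        (MvPolynomial.aeval
          (fun i : Fin N =>
            ∑ j' ∈ Finset.range (m + 1),
              Polynomial.C (MvPolynomial.X (i, j') : MvPolynomial (Fin N × ℕ) k) *
                Polynomial.X ^ j') f) j) =
    Polynomial.coeff
      (MvPolynomial.aeval
        (fun i : Fin N =>
          ∑ j' ∈ Finset.Icc 1 m,
            Polynomial.C (MvPolynomial.X (i, j') : MvPolynomial (Fin N × ℕ) k) *
              Polynomial.X ^ (j' - 1)) f) (j - d) := by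
  refine (Polynomial.coeff_map (aeval _).toRingHom j).symm.trans ?_
  rw [AlgHom.toRingHom_eq_coe, ← Polynomial.coe_mapAlgHom, comp_aeval_apply]
  simp only [Polynomial.coe_mapAlgHom, Polynomial.map_sum, Polynomial.map_mul, Polynomial.map_C,
    Polynomial.map_pow, Polynomial.map_X, RingHom.coe_coe, aeval_X,
    Polynomial.sum_range_C_ite_mul_X_pow, hf.aeval_mul_left]
  rw [Polynomial.coeff_X_pow_mul', if_pos hdj]

theorem jet_equation_shift {k : Type*} [CommRing k] (N m d : ℕ)
    (f : MvPolynomial (Fin N) k) (hf : f.IsHomogeneous d) (j : ℕ) (hdj : d ≤ j) (hjm : j ≤ m) :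
    MvPolynomial.aeval
      (fun v : Fin N × ℕ =>
        if v.2 = 0 then 0 else (MvPolynomial.X v : MvPolynomial (Fin N × ℕ) k))
      (Polynomial.coeff
        (MvPolynomial.aeval
          (fun i : Fin N =>
            ∑ j' ∈ Finset.range (m + 1),
              Polynomial.C (MvPolynomial.X (i, j') : MvPolynomial (Fin N × ℕ) k) *
                Polynomial.X ^ j') f) j) =
    Polynomial.coeff
      (MvPolynomial.aeval
        (fun i : Fin N =>
          ∑ j' ∈ Finset.Icc 1 m,
            Polynomial.C (MvPolynomial.X (i, j') : MvPolynomial (Fin N × ℕ) k) *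
              Polynomial.X ^ (j' - 1)) f) (j - d) :=
  jet_equation_shift_general N m d f hf j hdj
end

section
/- Let S be a commutative Noetherian ring of prime characteristic p, let f_1, …, f_r be a regular sequence in S, let I = (f_1, …, f_r), f = ∏_{i=1}^r f_i, and q = p^e a power of p. Then the colon ideal (I^{[q]} : I) equals I^{[q]} + f^{q−1}·S, where I^{[q]} = (f_1^q, …, f_r^q). -/
/-!
Work modulo an auxiliary ideal `K`, inducting along the sequence `x :: l`. Two facts about a
pair `x, y` with `x` regular on `S ⧸ K` and `y` regular on `S ⧸ (x) + K` drive everything: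
`x` stays regular on `S ⧸ (y) + K`, and `y` stays regular on `S ⧸ (xⁿ) + K`. Hence powers of a
weakly regular sequence are weakly regular and its first element is regular modulo the rest, so
`(x₁^a, …, x_r^a) : (x₁ ⋯ x_r)^b = (x₁^(a-b), …, x_r^(a-b))`.

For the colon by `I`: if `s I ⊆ I^[q]`, induction modulo `x^q` gives `s = m + w G^(q-1)` with
`m ∈ I^[q]` and `G` the product of the remaining elements. Then `s x ∈ I^[q]` turns into
`w x G^(q-1) ∈ I^[q]`, the monomial colon gives `w ∈ (x^(q-1)) + (l)`, and
`w G^(q-1) ∈ I^[q] + ((x G)^(q-1))` because `y G^(q-1) ∈ (y^q)` for every `y ∈ l`.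
-/

open Ideal

section

variable {S : Type*} [CommRing S]

namespace IsSMulRegular

variable {K : Ideal S} {x y : S}

lemma swap_quotient_span_sup (hx : IsSMulRegular (S ⧸ K) x)
    (hy : IsSMulRegular (S ⧸ (span {x} ⊔ K)) y) : IsSMulRegular (S ⧸ (span {y} ⊔ K)) x := by
  refine (isSMulRegular_quotient_iff_mem_of_smul_mem _ _).2 fun s hs => ?_
  obtain ⟨t, k, hk, hxs⟩ := mem_span_singleton_sup.1 hs
  have hyt : y • t ∈ span {x} ⊔ K := mem_span_singleton_sup.2
    ⟨s, -k, neg_mem hk, by rw [smul_eq_mul] at hxs ⊢; linear_combination -hxs⟩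
  obtain ⟨u, k', hk', htu⟩ :=
    mem_span_singleton_sup.1 (mem_of_isSMulRegular_quotient_of_smul_mem hy hyt)
  have hxsu : x • (s - u * y) ∈ K := by
    rw [smul_eq_mul] at hxs ⊢
    convert add_mem (mul_mem_right y _ hk') hk using 1
    linear_combination -hxs - y * htu
  exact mem_span_singleton_sup.2
    ⟨u, _, mem_of_isSMulRegular_quotient_of_smul_mem hx hxsu, by ring⟩

lemma quotient_span_pow_sup (hx : IsSMulRegular (S ⧸ K) x)
    (hy : IsSMulRegular (S ⧸ (span {x} ⊔ K)) y) (n : ℕ) :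
    IsSMulRegular (S ⧸ (span {x ^ n} ⊔ K)) y := by
  induction n with
  | zero => simp [(isSMulRegular_quotient_iff_mem_of_smul_mem _ _).2]
  | succ n ih =>
    refine (isSMulRegular_quotient_iff_mem_of_smul_mem _ _).2 fun s hs => ?_
    have hle : span {x ^ (n + 1)} ⊔ K ≤ span {x ^ n} ⊔ K :=
      sup_le_sup_right (span_singleton_le_span_singleton.2 (pow_dvd_pow x n.le_succ)) K
    obtain ⟨t, k, hk, hst⟩ :=
      mem_span_singleton_sup.1 (mem_of_isSMulRegular_quotient_of_smul_mem ih (hle hs))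
    obtain ⟨u, k', hk', hyu⟩ := mem_span_singleton_sup.1 hs
    have hxyt : x ^ n • (y * t - u * x) ∈ K := by
      rw [smul_eq_mul] at hyu ⊢
      convert sub_mem hk' (mul_mem_left K y hk) using 1
      linear_combination -hyu + y * hst
    have hyt : y • t ∈ span {x} ⊔ K := mem_span_singleton_sup.2
      ⟨u, _, mem_of_isSMulRegular_quotient_of_smul_mem (hx.pow n) hxyt,
        by rw [smul_eq_mul]; ring⟩
    obtain ⟨v, k'', hk'', htv⟩ :=
      mem_span_singleton_sup.1 (mem_of_isSMulRegular_quotient_of_smul_mem hy hyt)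
    exact mem_span_singleton_sup.2 ⟨v, k'' * x ^ n + k, add_mem (mul_mem_right _ _ hk'') hk,
      by linear_combination hst + x ^ n * htv⟩

lemma mem_span_pow_sup_of_pow_mul_mem {L : Ideal S} (hx : IsSMulRegular (S ⧸ L) x) {a b : ℕ}
    {s : S} (hs : x ^ b * s ∈ span {x ^ a} ⊔ L) : s ∈ span {x ^ (a - b)} ⊔ L := by
  rcases le_or_gt a b with hab | hab
  · simp [Nat.sub_eq_zero_of_le hab]
  obtain ⟨t, l, hl, hst⟩ := mem_span_singleton_sup.1 hs
  have hxst : x ^ b • (s - t * x ^ (a - b)) ∈ L := by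
    rw [smul_eq_mul]
    convert hl using 1
    rw [← pow_mul_pow_sub x hab.le] at hst
    linear_combination -hst
  exact mem_span_singleton_sup.2
    ⟨t, _, mem_of_isSMulRegular_quotient_of_smul_mem (hx.pow b) hxst, by ring⟩

end IsSMulRegular

namespace Ideal

lemma ofList_ofFn {n : ℕ} (f : Fin n → S) : ofList (List.ofFn f) = span (Set.range f) := by
  simp only [ofList, List.mem_ofFn']
  rfl

lemma ofList_le_colon_prod_pow_pred (l : List S) (q : ℕ) :
    ofList l ≤ (ofList (l.map (· ^ q))).colon {l.prod ^ (q - 1)} := by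
  refine span_le.2 fun y hy => Submodule.mem_colon_singleton.2 ?_
  have hdvd : y ^ q ∣ y * l.prod ^ (q - 1) := by
    refine (pow_dvd_pow y (by omega : q ≤ q - 1 + 1)).trans ?_
    rw [pow_succ']
    exact mul_dvd_mul_left y (pow_dvd_pow_of_dvd (List.dvd_prod hy) _)
  exact mem_of_dvd _ hdvd (subset_span (List.mem_map_of_mem hy))

lemma ofList_sup_span_pow_pred_sup_le_colon (x : S) (l : List S) (K : Ideal S) (q : ℕ) :
    ofList l ⊔ (span {x ^ (q - 1)} ⊔ K) ≤
      (ofList ((x :: l).map (· ^ q)) ⊔ span {(x :: l).prod ^ (q - 1)} ⊔ K).colon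
        {l.prod ^ (q - 1)} := by
  have hl : ofList (l.map (· ^ q)) ≤ ofList ((x :: l).map (· ^ q)) := by
    rw [List.map_cons, ofList_cons]
    exact le_sup_right
  refine sup_le ((ofList_le_colon_prod_pow_pred l q).trans
    (Submodule.colon_mono (hl.trans (le_sup_left.trans le_sup_left)) le_rfl))
    (sup_le ?_ fun k hk => ?_)
  · refine span_le.2 (Set.singleton_subset_iff.2 (Submodule.mem_colon_singleton.2 ?_))
    rw [smul_eq_mul, ← mul_pow, ← List.prod_cons]
    exact Submodule.mem_sup_left (Submodule.mem_sup_right (mem_span_singleton_self _))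
  · exact Submodule.mem_colon_singleton.2 (Submodule.mem_sup_right (mul_mem_right _ _ hk))

end Ideal

/-- A weakly regular sequence on `S ⧸ K`, phrased with ideals of `S` rather than with the iterated
quotient modules of `RingTheory.Sequence.IsWeaklyRegular`. -/
def IsWeaklyRegularOver (K : Ideal S) : List S → Prop
  | [] => True
  | x :: l => IsSMulRegular (S ⧸ K) x ∧ IsWeaklyRegularOver (span {x} ⊔ K) l

namespace IsWeaklyRegularOver

variable {K : Ideal S} {x : S} {l : List S}

lemma of_forall_getElem :
    ∀ {K : Ideal S} {l : List S}, (∀ i (hi : i < l.length),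
      IsSMulRegular (S ⧸ (ofList (l.take i) ⊔ K)) l[i]) → IsWeaklyRegularOver K l
  | _, [], _ => trivial
  | K, x :: l, h => by
    refine ⟨?_, of_forall_getElem fun i hi => ?_⟩
    · have := h 0 (by simp)
      rwa [List.take_zero, ofList_nil, bot_sup_eq] at this
    · have := h (i + 1) (by simpa using hi)
      rwa [List.take_succ_cons, ofList_cons, sup_assoc, sup_left_comm] at this

lemma of_isWeaklyRegular (h : RingTheory.Sequence.IsWeaklyRegular S l) :
    IsWeaklyRegularOver ⊥ l :=
  of_forall_getElem fun i hi => by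
    have := h.regular_mod_prev i hi
    rwa [Ideal.smul_eq_mul, mul_top, ← sup_bot_eq (ofList _)] at this

lemma isSMulRegular_head : ∀ {K : Ideal S} {l : List S},
    IsWeaklyRegularOver K (x :: l) → IsSMulRegular (S ⧸ (ofList l ⊔ K)) x
  | _, [], h => by rw [ofList_nil, bot_sup_eq]; exact h.1
  | K, y :: l, ⟨hx, hy, hl⟩ => by
    have := isSMulRegular_head (K := span {y} ⊔ K) (l := l)
      ⟨hx.swap_quotient_span_sup hy, by rwa [sup_left_comm]⟩
    rwa [ofList_cons, sup_assoc, sup_left_comm]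

lemma span_pow_sup (hx : IsSMulRegular (S ⧸ K) x) (n : ℕ) :
    IsWeaklyRegularOver (span {x} ⊔ K) l → IsWeaklyRegularOver (span {x ^ n} ⊔ K) l := by
  induction l generalizing K with
  | nil => exact id
  | cons y l ih =>
    rintro ⟨hy, hl⟩
    refine ⟨hx.quotient_span_pow_sup hy n, ?_⟩
    rw [sup_left_comm] at hl ⊢
    exact ih (hx.swap_quotient_span_sup hy) hl

lemma map_pow (n : ℕ) : IsWeaklyRegularOver K l → IsWeaklyRegularOver K (l.map (· ^ n)) := by
  induction l generalizing K with
  | nil => exact id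
  | cons x l ih => exact fun ⟨hx, hl⟩ => ⟨hx.pow n, ih (span_pow_sup hx n hl)⟩

lemma isSMulRegular_head_map_pow (h : IsWeaklyRegularOver K (x :: l)) (n : ℕ) :
    IsSMulRegular (S ⧸ (ofList (l.map (· ^ n)) ⊔ K)) x :=
  isSMulRegular_head ⟨h.1, map_pow n h.2⟩

lemma mem_of_prod_pow_mul_mem (h : IsWeaklyRegularOver K l) {a b : ℕ} {s : S}
    (hs : l.prod ^ b * s ∈ ofList (l.map (· ^ a)) ⊔ K) :
    s ∈ ofList (l.map (· ^ (a - b))) ⊔ K := by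
  induction l generalizing K s with
  | nil => simpa using hs
  | cons x l ih =>
    rw [List.prod_cons, mul_pow, mul_assoc, List.map_cons, ofList_cons, sup_assoc] at hs
    have hx := (isSMulRegular_head_map_pow h a).mem_span_pow_sup_of_pow_mul_mem hs
    rw [sup_left_comm] at hx
    rw [List.map_cons, ofList_cons, sup_assoc, sup_left_comm]
    exact ih (span_pow_sup h.1 _ h.2) hx

lemma mem_of_forall_mul_mem (h : IsWeaklyRegularOver K l) (q : ℕ) {s : S}
    (hs : ∀ y ∈ l, s * y ∈ ofList (l.map (· ^ q)) ⊔ K) :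
    s ∈ ofList (l.map (· ^ q)) ⊔ span {l.prod ^ (q - 1)} ⊔ K := by
  induction l generalizing K with
  | nil => simp
  | cons x l ih =>
    rcases q.eq_zero_or_pos with rfl | hq
    · simp
    set J := ofList (l.map (· ^ q))
    have hJx : ofList ((x :: l).map (· ^ q)) ⊔ K = J ⊔ (span {x ^ q} ⊔ K) := by
      rw [List.map_cons, ofList_cons, sup_assoc, sup_left_comm]
    have hsl : s ∈ span {l.prod ^ (q - 1)} ⊔ (ofList ((x :: l).map (· ^ q)) ⊔ K) := by
      have := ih (span_pow_sup h.1 q h.2) fun y hy => hJx ▸ hs y (List.mem_cons_of_mem x hy)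
      rwa [sup_comm J, sup_assoc, ← hJx] at this
    obtain ⟨w, m, hm, rfl⟩ := mem_span_singleton_sup.1 hsl
    have hwx : x ^ 1 * (l.prod ^ (q - 1) * w) ∈ span {x ^ q} ⊔ (J ⊔ K) := by
      rw [sup_left_comm, ← hJx]
      convert sub_mem (hs x List.mem_cons_self) (mul_mem_right x _ hm) using 1
      ring
    have hw := mem_of_prod_pow_mul_mem (span_pow_sup h.1 (q - 1) h.2) (a := q) (b := q - 1) <|
      by simpa only [sup_left_comm] using
        (isSMulRegular_head_map_pow h q).mem_span_pow_sup_of_pow_mul_mem hwx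
    rw [Nat.sub_sub_self hq, List.map_id'' pow_one] at hw
    exact add_mem
      (Submodule.mem_colon_singleton.1 (ofList_sup_span_pow_pred_sup_le_colon x l K q hw))
      (sup_le_sup_right le_sup_left K hm)

end IsWeaklyRegularOver

theorem Ideal.colon_ofList_map_pow {l : List S} (hl : RingTheory.Sequence.IsWeaklyRegular S l)
    (q : ℕ) : (ofList (l.map (· ^ q))).colon (ofList l) =
      ofList (l.map (· ^ q)) ⊔ span {l.prod ^ (q - 1)} := by
  refine le_antisymm (fun s hs => ?_) (sup_le le_colon ?_)
  · rw [Ideal.colon_span, Submodule.mem_colon] at hs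
    simpa using (IsWeaklyRegularOver.of_isWeaklyRegular hl).mem_of_forall_mul_mem q
      fun y hy => by simpa [mul_comm] using hs y hy
  · rw [span_le, Set.singleton_subset_iff, SetLike.mem_coe, Ideal.colon_span, Submodule.mem_colon]
    intro y hy
    rw [smul_eq_mul, mul_comm]
    exact Submodule.mem_colon_singleton.1 (ofList_le_colon_prod_pow_pred l q (subset_span hy))

end

theorem colon_frobenius_power_general (S : Type*) [CommRing S]
    (p : ℕ) (r : ℕ) (f : Fin r → S)
    (hreg : RingTheory.Sequence.IsRegular S (List.ofFn f)) (e : ℕ) :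
    (Ideal.span (Set.range fun i => f i ^ p ^ e)).colon (Ideal.span (Set.range f)) =
      Ideal.span (Set.range fun i => f i ^ p ^ e) ⊔
        Ideal.span {(∏ i, f i) ^ (p ^ e - 1)} := by
  have h := colon_ofList_map_pow hreg.toIsWeaklyRegular (p ^ e)
  rwa [List.map_ofFn, ofList_ofFn, ofList_ofFn, List.prod_ofFn] at h

theorem colon_frobenius_power (S : Type*) [CommRing S] [IsNoetherianRing S]
    (p : ℕ) (hp : p.Prime) [CharP S p] (r : ℕ) (f : Fin r → S)
    (hreg : RingTheory.Sequence.IsRegular S (List.ofFn f)) (e : ℕ) :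
    (Ideal.span (Set.range fun i => f i ^ p ^ e)).colon (Ideal.span (Set.range f)) =
      Ideal.span (Set.range fun i => f i ^ p ^ e) ⊔
        Ideal.span {(∏ i, f i) ^ (p ^ e - 1)} :=
  colon_frobenius_power_general S p r f hreg e
end

section
/- Let d ≥ 2, l ≥ 1, m = dl, and e > 0 a real number. Suppose δ_0, δ_1, …, δ_m are real numbers satisfying ∑_{i=0}^m δ_i = 0, ∑_{i=0}^m i·δ_i = 0, δ_0 ≤ d(d−1)/2 − e, δ_i ≤ −e for 1 ≤ i ≤ l−1, and δ_i ≥ 0 for i ≥ l+1. Then ∑_{i=0}^m i·δ_i ≥ (1/2)(e·l² + (e − d² + d)·l); in particular, if l is large enough that e·l² + (e − d² + d)·l > 0, such a sequence (δ_i) cannot exist. -/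
/-!
Both constraints give `∑ (i - l) δ_i = 0`. In this centred sum every term with `i > l` is
nonnegative, the term `i = 0` is at least `-l (d(d-1)/2 - e)`, and the terms `1 ≤ i < l` add up to
at least `e (1 + ⋯ + (l-1)) = e l(l-1)/2`; together these bounds are exactly the claimed quantity.
-/

open Finset

theorem sum_range_sub_cast_mul_eq_zero {δ : ℕ → ℝ} {n : ℕ} (c : ℝ)
    (hsum : ∑ i ∈ range n, δ i = 0) (hwsum : ∑ i ∈ range n, (i : ℝ) * δ i = 0) :
    ∑ i ∈ range n, ((i : ℝ) - c) * δ i = 0 := by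
  simp only [sub_mul, sum_sub_distrib, ← mul_sum, hsum, hwsum, mul_zero, sub_zero]

theorem sum_range_nat_sub_cast (k : ℕ) : ∑ i ∈ range k, ((k : ℝ) - i) = k * (k + 1) / 2 := by
  induction k with
  | zero => simp
  | succ k ih =>
    rw [sum_range_succ]
    simp only [Nat.cast_succ, add_sub_right_comm _ (1 : ℝ), sum_add_distrib, ih, sum_const,
      card_range, nsmul_eq_mul]
    ring

theorem le_sum_range_sub_cast_mul {δ : ℕ → ℝ} {l : ℕ} {e : ℝ} (hl : 1 ≤ l)
    (hneg : ∀ i, 1 ≤ i → i ≤ l - 1 → δ i ≤ -e) :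
    -l * δ 0 + e * (l * (l - 1) / 2) ≤ ∑ i ∈ range l, ((i : ℝ) - l) * δ i := by
  obtain ⟨k, rfl⟩ := Nat.exists_eq_add_of_le' hl
  have hterm : ∀ i ∈ range k, e * ((k : ℝ) - i) ≤ ((↑(i + 1) : ℝ) - ↑(k + 1)) * δ (i + 1) := by
    intro i hi
    have hik : (i : ℝ) ≤ k := by exact_mod_cast (mem_range.1 hi).le
    have := hneg (i + 1) (by omega) (by have := mem_range.1 hi; omega)
    push_cast
    nlinarith
  calc -↑(k + 1) * δ 0 + e * (↑(k + 1) * (↑(k + 1) - 1) / 2)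
      = ∑ i ∈ range k, e * ((k : ℝ) - i) + ((0 : ℕ) - ↑(k + 1)) * δ 0 := by
        rw [← mul_sum, sum_range_nat_sub_cast]; push_cast; ring
    _ ≤ ∑ i ∈ range (k + 1), ((i : ℝ) - ↑(k + 1)) * δ i := by
        rw [sum_range_succ' _ k]
        exact add_le_add_left (sum_le_sum hterm) _

theorem sum_Ico_sub_cast_mul_nonneg {δ : ℕ → ℝ} {l n : ℕ}
    (hpos : ∀ i, l + 1 ≤ i → i ≤ n → 0 ≤ δ i) :
    0 ≤ ∑ i ∈ Ico l (n + 1), ((i : ℝ) - l) * δ i := by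
  refine sum_nonneg fun i hi => ?_
  obtain ⟨hli, hin⟩ := mem_Ico.1 hi
  rcases hli.eq_or_lt with rfl | hlt
  · simp
  · have : (l : ℝ) < i := by exact_mod_cast hlt
    exact mul_nonneg (by linarith) (hpos i hlt (by omega))

theorem delta_estimate_general (d l m : ℕ) (hd : 2 ≤ d) (hl : 1 ≤ l) (hm : m = d * l)
    (e : ℝ) (δ : ℕ → ℝ)
    (hsum : ∑ i ∈ Finset.range (m + 1), δ i = 0)
    (hwsum : ∑ i ∈ Finset.range (m + 1), (i : ℝ) * δ i = 0)
    (h0 : δ 0 ≤ (d : ℝ) * (d - 1) / 2 - e)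
    (hneg : ∀ i, 1 ≤ i → i ≤ l - 1 → δ i ≤ -e)
    (hpos : ∀ i, l + 1 ≤ i → i ≤ m → 0 ≤ δ i) :
    (∑ i ∈ Finset.range (m + 1), (i : ℝ) * δ i ≥
      (1 / 2) * (e * (l : ℝ) ^ 2 + (e - (d : ℝ) ^ 2 + d) * l)) ∧
    (e * (l : ℝ) ^ 2 + (e - (d : ℝ) ^ 2 + d) * l > 0 → False) := by
  have hlm : l ≤ m := hm ▸ Nat.le_mul_of_pos_left l (by omega)
  have hcentred := sum_range_sub_cast_mul_eq_zero (l : ℝ) hsum hwsum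
  rw [← sum_range_add_sum_Ico _ (by omega : l ≤ m + 1)] at hcentred
  have hhead := le_sum_range_sub_cast_mul hl hneg
  have htail := sum_Ico_sub_cast_mul_nonneg hpos
  have hδ0 := mul_le_mul_of_nonneg_left h0 (Nat.cast_nonneg (α := ℝ) l)
  have hbound : (1 / 2) * (e * (l : ℝ) ^ 2 + (e - (d : ℝ) ^ 2 + d) * l) ≤ 0 := by
    linarith
  exact ⟨hwsum ▸ hbound, fun hQ => by linarith⟩

theorem delta_estimate (d l m : ℕ) (hd : 2 ≤ d) (hl : 1 ≤ l) (hm : m = d * l)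
    (e : ℝ) (he : 0 < e) (δ : ℕ → ℝ)
    (hsum : ∑ i ∈ Finset.range (m + 1), δ i = 0)
    (hwsum : ∑ i ∈ Finset.range (m + 1), (i : ℝ) * δ i = 0)
    (h0 : δ 0 ≤ (d : ℝ) * (d - 1) / 2 - e)
    (hneg : ∀ i, 1 ≤ i → i ≤ l - 1 → δ i ≤ -e)
    (hpos : ∀ i, l + 1 ≤ i → i ≤ m → 0 ≤ δ i) :
    (∑ i ∈ Finset.range (m + 1), (i : ℝ) * δ i ≥
      (1 / 2) * (e * (l : ℝ) ^ 2 + (e - (d : ℝ) ^ 2 + d) * l)) ∧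
    (e * (l : ℝ) ^ 2 + (e - (d : ℝ) ^ 2 + d) * l > 0 → False) :=
  delta_estimate_general d l m hd hl hm e δ hsum hwsum h0 hneg hpos
end
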